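/- Under the stated setup with a double eigenvalue λ, if λ ≠ 0 and D₃ ≠ 0, then CV⁻(h) ≠ 0 for all sufficiently large h and lim_{h→∞} CD⁻(h)/CV⁻(h) = α. -/

import Mathlib

open MeasureTheory Filter Topology

/-- The signed power `x^⟨p⟩ = |x|^p · sign x`. -/
noncomputable def spow (x p : ℝ) : ℝ := |x| ^ p * Real.sign x

/-- The unit sphere `S₂ ⊆ ℝ²`. -/
abbrev Sphere2 : Type := {s : ℝ × ℝ // s.1 ^ 2 + s.2 ^ 2 = 1}

noncomputable def A2 (a1 a2 a3 a4 l : ℝ) (j : ℕ) (s : Sphere2) : ℝ :=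
  (j : ℝ) * l ^ ((j : ℤ) - 1) * a1 * s.1.1 - (j : ℝ) * l ^ j * s.1.1 + l ^ j * s.1.1
    + (j : ℝ) * l ^ ((j : ℤ) - 1) * a2 * s.1.2

noncomputable def B2 (a1 a2 a3 a4 l : ℝ) (j : ℕ) (s : Sphere2) : ℝ :=
  l ^ ((j : ℤ) - 1) * a1 * s.1.1 - l ^ j * s.1.1 + l ^ ((j : ℤ) - 1) * a2 * s.1.2

noncomputable def C2 (a1 a2 a3 a4 l : ℝ) (j : ℕ) (s : Sphere2) : ℝ :=
  (j : ℝ) * l ^ ((j : ℤ) - 1) * a3 * s.1.1 + (j : ℝ) * l ^ ((j : ℤ) - 1) * a4 * s.1.2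
    - (j : ℝ) * l ^ j * s.1.2 + l ^ j * s.1.2

/-- The cross-codifference `CD(X₁(t), X₂(t-h))` in the double-eigenvalue case. -/
noncomputable def CDneg' (Γ : Measure Sphere2) (α a1 a2 a3 a4 l : ℝ) (h : ℕ) : ℝ :=
  ∑' j : ℕ, ∫ s,
    (|l ^ h * A2 a1 a2 a3 a4 l j s + (h : ℝ) * l ^ h * B2 a1 a2 a3 a4 l j s| ^ α
      + |C2 a1 a2 a3 a4 l j s| ^ α
      - |C2 a1 a2 a3 a4 l j s - (l ^ h * A2 a1 a2 a3 a4 l j s + (h : ℝ) * l ^ h * B2 a1 a2 a3 a4 l j s)| ^ α) ∂Γ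

/-- The cross-covariation `CV(X₁(t), X₂(t-h))` in the double-eigenvalue case. -/
noncomputable def CVneg' (Γ : Measure Sphere2) (α a1 a2 a3 a4 l : ℝ) (h : ℕ) : ℝ :=
  ∑' j : ℕ, ∫ s,
    spow (C2 a1 a2 a3 a4 l j s) (α - 1) * (l ^ h * A2 a1 a2 a3 a4 l j s + (h : ℝ) * l ^ h * B2 a1 a2 a3 a4 l j s) ∂Γ

noncomputable def E3 (Γ : Measure Sphere2) (α a1 a2 a3 a4 l : ℝ) : ℝ :=
  ∑' j : ℕ, ∫ s, A2 a1 a2 a3 a4 l j s * spow (C2 a1 a2 a3 a4 l j s) (α - 1) ∂Γ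

noncomputable def D3 (Γ : Measure Sphere2) (α a1 a2 a3 a4 l : ℝ) : ℝ :=
  ∑' j : ℕ, ∫ s, B2 a1 a2 a3 a4 l j s * spow (C2 a1 a2 a3 a4 l j s) (α - 1) ∂Γ

open scoped NNReal
set_option linter.unusedVariables false
set_option maxHeartbeats 1000000



/-! ### spow basics -/

lemma spow_of_nonneg {x : ℝ} {p : ℝ} (hp : p ≠ 0) (hx : 0 ≤ x) : spow x p = x ^ p := by
  rcases eq_or_lt_of_le hx with h | h
  · simp [spow, ← h, Real.zero_rpow hp, Real.sign_zero]
  · simp [spow, abs_of_pos h, Real.sign_of_pos h]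

lemma spow_neg_arg (x p : ℝ) : spow (-x) p = - spow x p := by
  simp [spow, Real.sign_neg, mul_comm]

lemma abs_sign_le (x : ℝ) : |Real.sign x| ≤ 1 := by
  rcases Real.sign_apply_eq x with h | h | h <;> rw [h] <;> norm_num

lemma abs_spow_le (x p : ℝ) : |spow x p| ≤ |x| ^ p := by
  unfold spow
  rw [abs_mul, abs_of_nonneg (Real.rpow_nonneg (abs_nonneg x) p)]
  nlinarith [abs_sign_le x, Real.rpow_nonneg (abs_nonneg x) p, abs_nonneg (Real.sign x)]

/-! ### rpow inequalities -/

lemma rpow_add_le' {x y p : ℝ} (hx : 0 ≤ x) (hy : 0 ≤ y) (hp : 0 ≤ p) (hp1 : p ≤ 1) :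
    (x + y) ^ p ≤ x ^ p + y ^ p := by
  have h := NNReal.rpow_add_le_add_rpow x.toNNReal y.toNNReal hp hp1
  have h2 : ((x.toNNReal + y.toNNReal : ℝ≥0) : ℝ) = x + y := by
    push_cast; rw [Real.coe_toNNReal x hx, Real.coe_toNNReal y hy]
  calc (x+y)^p = (((x.toNNReal + y.toNNReal : ℝ≥0) : ℝ))^p := by rw [h2]
    _ = (((x.toNNReal + y.toNNReal : ℝ≥0)^p : ℝ≥0) : ℝ) := by rw [← NNReal.coe_rpow]
    _ ≤ (((x.toNNReal^p + y.toNNReal^p : ℝ≥0)) : ℝ) := by exact_mod_cast h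
    _ = x^p + y^p := by
        push_cast
        rw [Real.coe_toNNReal x hx, Real.coe_toNNReal y hy]

lemma rpow_sub_le {a b p : ℝ} (ha : 0 ≤ a) (hb : 0 ≤ b) (hp : 0 ≤ p) (hp1 : p ≤ 1) :
    a ^ p - b ^ p ≤ |a - b| ^ p := by
  rcases le_total a b with h | h
  · have : a ^ p ≤ b ^ p := Real.rpow_le_rpow ha h hp
    have : (0:ℝ) ≤ |a - b| ^ p := Real.rpow_nonneg (abs_nonneg _) p
    linarith
  · have h1 := rpow_add_le' hb (sub_nonneg.2 h) hp hp1
    rw [show b + (a - b) = a by ring] at h1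
    have : |a - b| = a - b := abs_of_nonneg (by linarith)
    rw [this]; linarith

lemma abs_rpow_sub_rpow_le {a b p : ℝ} (ha : 0 ≤ a) (hb : 0 ≤ b) (hp : 0 ≤ p) (hp1 : p ≤ 1) :
    |a ^ p - b ^ p| ≤ |a - b| ^ p := by
  rw [abs_sub_le_iff]
  constructor
  · exact rpow_sub_le ha hb hp hp1
  · rw [show |a - b| = |b - a| from abs_sub_comm a b]
    exact rpow_sub_le hb ha hp hp1

lemma abs_spow_sub_spow_le {a b p : ℝ} (hp : 0 < p) (hp1 : p ≤ 1) :
    |spow a p - spow b p| ≤ 2 * |a - b| ^ p := by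
  have key : ∀ x y : ℝ, 0 ≤ x → 0 ≤ y → |spow x p - spow y p| ≤ 2 * |x - y| ^ p := by
    intro x y hx hy
    rw [spow_of_nonneg hp.ne' hx, spow_of_nonneg hp.ne' hy]
    have := abs_rpow_sub_rpow_le hx hy hp.le hp1
    nlinarith [Real.rpow_nonneg (abs_nonneg (x - y)) p]
  have mix : ∀ x y : ℝ, 0 ≤ x → y ≤ 0 → |spow x p - spow y p| ≤ 2 * |x - y| ^ p := by
    intro x y hx hy
    have hxy : |x - y| = x - y := abs_of_nonneg (by linarith)
    have h1 : spow x p = x ^ p := spow_of_nonneg hp.ne' hx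
    have h2 : spow y p = -((-y) ^ p) := by
      have hne := spow_neg_arg (-y) p
      rw [neg_neg] at hne
      rw [hne, spow_of_nonneg hp.ne' (by linarith : (0:ℝ) ≤ -y)]
    have hx' : x ^ p ≤ (x - y) ^ p := Real.rpow_le_rpow hx (by linarith) hp.le
    have hy' : (-y) ^ p ≤ (x - y) ^ p := Real.rpow_le_rpow (by linarith) (by linarith) hp.le
    have hxp : 0 ≤ x ^ p := Real.rpow_nonneg hx _
    have hyp : 0 ≤ (-y) ^ p := Real.rpow_nonneg (by linarith) _
    rw [h1, h2, hxy]
    rw [abs_of_nonneg (by linarith)]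
    linarith
  rcases le_total 0 a with ha | ha <;> rcases le_total 0 b with hb | hb
  · exact key a b ha hb
  · exact mix a b ha hb
  · rw [abs_sub_comm, abs_sub_comm a b]; exact mix b a hb ha
  · have := key (-a) (-b) (by linarith) (by linarith)
    rw [spow_neg_arg, spow_neg_arg] at this
    rw [show -spow a p - -spow b p = -(spow a p - spow b p) by ring] at this
    rw [abs_neg] at this
    rw [show (-a) - (-b) = -(a - b) by ring, abs_neg] at this
    rw [abs_sub_comm] at this
    rwa [abs_sub_comm]


lemma rpow_le_add_sq {x p : ℝ} (hx : 0 ≤ x) (h1 : 1 ≤ p) (h2 : p ≤ 2) :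
    x ^ p ≤ x + x ^ 2 := by
  rcases eq_or_lt_of_le hx with h | h
  · rw [← h, Real.zero_rpow (by linarith)]; norm_num
  · rcases le_total x 1 with hx1 | hx1
    · have := Real.rpow_le_rpow_of_exponent_ge h hx1 h1
      rw [Real.rpow_one] at this
      nlinarith [sq_nonneg x]
    · have := Real.rpow_le_rpow_of_exponent_le hx1 h2
      rw [show (2:ℝ) = ((2:ℕ):ℝ) by norm_num, Real.rpow_natCast] at this
      nlinarith
lemma rpow_le_one_add {x p : ℝ} (hx : 0 ≤ x) (h0 : 0 ≤ p) (h1 : p ≤ 1) :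
    x ^ p ≤ 1 + x := by
  rcases eq_or_lt_of_le hx with h | h
  · rw [← h]
    rcases eq_or_lt_of_le h0 with h' | h'
    · rw [← h', Real.rpow_zero]; norm_num
    · rw [Real.zero_rpow h'.ne']; norm_num
  · rcases le_total x 1 with hx1 | hx1
    · have := Real.rpow_le_one hx hx1 h0
      linarith
    · have := Real.rpow_le_rpow_of_exponent_le hx1 h1
      rw [Real.rpow_one] at this
      linarith


lemma slope_est {p : ℝ} (hp1 : 1 < p) {a b : ℝ} (ha : 0 < a) (hab : a < b) :
    ∃ ξ ∈ Set.Ioo a b, b ^ p - a ^ p = p * ξ ^ (p - 1) * (b - a) := by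
  have hcont : ContinuousOn (fun x : ℝ => x ^ p) (Set.Icc a b) := by
    intro x hx
    have hx0 : x ≠ 0 := by intro h; rw [h] at hx; exact absurd hx.1 (by linarith)
    exact (Real.continuousAt_rpow_const x p (Or.inl hx0)).continuousWithinAt
  have hderiv : ∀ x ∈ Set.Ioo a b, HasDerivAt (fun x : ℝ => x ^ p) (p * x ^ (p - 1)) x := by
    intro x hx
    have hx0 : x ≠ 0 := by intro h; rw [h] at hx; exact absurd hx.1 (by linarith)
    exact Real.hasDerivAt_rpow_const (Or.inl hx0)
  obtain ⟨ξ, hξ, heq⟩ := exists_hasDerivAt_eq_slope (fun x : ℝ => x ^ p)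
    (fun x => p * x ^ (p - 1)) hab hcont hderiv
  refine ⟨ξ, hξ, ?_⟩
  have hba : b - a ≠ 0 := by linarith [hξ.1]
  field_simp at heq
  linarith [heq]

lemma mvt_rpow {p : ℝ} (hp1 : 1 < p) (hp2 : p < 2) {c ε : ℝ} (hc : 0 < c) (hε : 2 * |ε| < c) :
    |(c - ε) ^ p - c ^ p + p * c ^ (p - 1) * ε| ≤ p * |ε| ^ p := by
  rcases eq_or_ne ε 0 with h0 | h0
  · subst h0
    simp [Real.zero_rpow (by linarith : p ≠ 0)]
  have hεpos : 0 < |ε| := abs_pos.mpr h0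
  -- in both cases, obtain ξ with  (c-ε)^p - c^p = -p ξ^(p-1) ε  and |c - ξ| ≤ |ε|
  obtain ⟨ξ, hξpos, hξd, heq⟩ :
      ∃ ξ : ℝ, 0 < ξ ∧ |c - ξ| ≤ |ε| ∧ (c - ε) ^ p - c ^ p = -(p * ξ ^ (p - 1) * ε) := by
    rcases h0.lt_or_gt with hneg | hpos
    · -- ε < 0 : a = c, b = c - ε
      have habs : |ε| = -ε := abs_of_neg hneg
      obtain ⟨ξ, hξ, heq⟩ := slope_est hp1 hc (show c < c - ε by linarith)
      refine ⟨ξ, by linarith [hξ.1], ?_, by rw [show c - ε - c = -ε by ring] at heq; nlinarith [heq]⟩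
      rw [abs_le]; constructor <;> nlinarith [hξ.1, hξ.2]
    · -- ε > 0 : a = c - ε, b = c
      have habs : |ε| = ε := abs_of_pos hpos
      have hca : 0 < c - ε := by nlinarith
      obtain ⟨ξ, hξ, heq⟩ := slope_est hp1 hca (show c - ε < c by linarith)
      refine ⟨ξ, by linarith [hξ.1], ?_, by rw [show c - (c - ε) = ε by ring] at heq; nlinarith [heq]⟩
      rw [abs_le]; constructor <;> nlinarith [hξ.1, hξ.2]
  rw [heq]
  have hβ0 : (0:ℝ) < p - 1 := by linarith
  have hβ1 : p - 1 ≤ 1 := by linarith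
  have key : |c ^ (p-1) - ξ ^ (p-1)| ≤ |ε| ^ (p-1) := by
    calc |c ^ (p-1) - ξ ^ (p-1)| ≤ |c - ξ| ^ (p-1) :=
          abs_rpow_sub_rpow_le hc.le hξpos.le hβ0.le hβ1
      _ ≤ |ε| ^ (p-1) := Real.rpow_le_rpow (abs_nonneg _) hξd hβ0.le
  have hrw : p * c ^ (p-1) * ε + -(p * ξ ^ (p-1) * ε) = p * ε * (c ^ (p-1) - ξ ^ (p-1)) := by ring
  have : |(-(p * ξ ^ (p - 1) * ε)) + p * c ^ (p - 1) * ε| = |p * ε * (c ^ (p-1) - ξ ^ (p-1))| := by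
    rw [show (-(p * ξ ^ (p - 1) * ε)) + p * c ^ (p - 1) * ε
        = p * ε * (c ^ (p-1) - ξ ^ (p-1)) by ring]
  rw [this]
  rw [abs_mul, abs_mul, abs_of_pos (by linarith : (0:ℝ) < p)]
  have hfin : |ε| * |c ^ (p-1) - ξ ^ (p-1)| ≤ |ε| * |ε| ^ (p-1) :=
    mul_le_mul_of_nonneg_left key (abs_nonneg _)
  have hpow : |ε| * |ε| ^ (p-1) = |ε| ^ p := by
    rw [mul_comm, ← Real.rpow_add_one (by positivity : |ε| ≠ 0) (p-1)]
    norm_num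
  calc p * |ε| * |c ^ (p-1) - ξ ^ (p-1)| = p * (|ε| * |c ^ (p-1) - ξ ^ (p-1)|) := by ring
    _ ≤ p * (|ε| * |ε| ^ (p-1)) := by
        apply mul_le_mul_of_nonneg_left hfin (by linarith)
    _ = p * |ε| ^ p := by rw [hpow]

lemma G_bound {p : ℝ} (hp1 : 1 < p) (hp2 : p < 2) (c ε : ℝ) :
    |(|c - ε| ^ p - |c| ^ p + p * spow c (p - 1) * ε)| ≤ (14 + 3 * p) * |ε| ^ p := by
  have hεp : (0:ℝ) ≤ |ε| ^ p := Real.rpow_nonneg (abs_nonneg _) p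
  rcases eq_or_ne ε 0 with h0 | h0
  · subst h0; simp; positivity
  have hεpos : 0 < |ε| := abs_pos.mpr h0
  by_cases hcase : 2 * |ε| < |c|
  · -- smooth case
    have hsm : ∀ c' ε' : ℝ, 0 < c' → 2 * |ε'| < c' → ε' ≠ 0 →
        |(|c' - ε'| ^ p - |c'| ^ p + p * spow c' (p - 1) * ε')| ≤ (14 + 3 * p) * |ε'| ^ p := by
      intro c' ε' hc' hce' hε'
      have h1 : |c'| = c' := abs_of_pos hc'
      have h2 : |c' - ε'| = c' - ε' := abs_of_pos (by
        cases' abs_cases ε' with h h <;> nlinarith [h.1])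
      have h3 : spow c' (p - 1) = c' ^ (p - 1) := spow_of_nonneg (by linarith) hc'.le
      rw [h1, h2, h3]
      calc |(c' - ε') ^ p - c' ^ p + p * c' ^ (p - 1) * ε'| ≤ p * |ε'| ^ p :=
            mvt_rpow hp1 hp2 hc' hce'
        _ ≤ (14 + 3 * p) * |ε'| ^ p := by
            have : (0:ℝ) ≤ |ε'| ^ p := Real.rpow_nonneg (abs_nonneg _) p
            nlinarith
    rcases (abs_pos.mp (by linarith [abs_nonneg ε] : 0 < |c|)).lt_or_gt with hneg | hpos
    · -- c < 0 : apply to -c, -ε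
      have h := hsm (-c) (-ε) (by linarith)
        (by rw [abs_neg]; rwa [abs_of_neg hneg] at hcase) (by simpa using h0)
      rw [show -c - -ε = -(c - ε) by ring, abs_neg, abs_neg, abs_neg, spow_neg_arg] at h
      calc |(|c - ε| ^ p - |c| ^ p + p * spow c (p - 1) * ε)|
          = |(|c - ε| ^ p - |c| ^ p + p * -spow c (p - 1) * -ε)| := by ring_nf
        _ ≤ (14 + 3 * p) * |ε| ^ p := h
    · exact hsm c ε hpos (by rwa [abs_of_pos hpos] at hcase) h0
  · -- crude case : |c| ≤ 2|ε|
    push_neg at hcase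
    have hb1 : |c - ε| ^ p ≤ 9 * |ε| ^ p := by
      have h1 : |c - ε| ≤ 3 * |ε| := by
        calc |c - ε| ≤ |c| + |ε| := abs_sub c ε
          _ ≤ 3 * |ε| := by linarith
      calc |c - ε| ^ p ≤ (3 * |ε|) ^ p := Real.rpow_le_rpow (abs_nonneg _) h1 (by linarith)
        _ = 3 ^ p * |ε| ^ p := Real.mul_rpow (by norm_num) (abs_nonneg _)
        _ ≤ 9 * |ε| ^ p := by
            have h3 : (3:ℝ) ^ p ≤ 3 ^ (2:ℝ) :=
              Real.rpow_le_rpow_of_exponent_le (by norm_num) (by linarith)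
            have h9 : (3:ℝ) ^ (2:ℝ) = 9 := by
              rw [show (2:ℝ) = ((2:ℕ):ℝ) by norm_num, Real.rpow_natCast]; norm_num
            nlinarith
    have hb2 : |c| ^ p ≤ 4 * |ε| ^ p := by
      calc |c| ^ p ≤ (2 * |ε|) ^ p := Real.rpow_le_rpow (abs_nonneg _) hcase (by linarith)
        _ = 2 ^ p * |ε| ^ p := Real.mul_rpow (by norm_num) (abs_nonneg _)
        _ ≤ 4 * |ε| ^ p := by
            have h3 : (2:ℝ) ^ p ≤ 2 ^ (2:ℝ) :=
              Real.rpow_le_rpow_of_exponent_le (by norm_num) (by linarith)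
            have h9 : (2:ℝ) ^ (2:ℝ) = 4 := by
              rw [show (2:ℝ) = ((2:ℕ):ℝ) by norm_num, Real.rpow_natCast]; norm_num
            nlinarith
    have hb3 : p * |spow c (p - 1)| * |ε| ≤ 2 * p * |ε| ^ p := by
      have h1 : |spow c (p - 1)| ≤ |c| ^ (p - 1) := abs_spow_le c (p - 1)
      have h2 : |c| ^ (p - 1) ≤ (2 * |ε|) ^ (p - 1) :=
        Real.rpow_le_rpow (abs_nonneg _) hcase (by linarith)
      have h3 : (2 * |ε|) ^ (p - 1) = 2 ^ (p - 1) * |ε| ^ (p - 1) :=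
        Real.mul_rpow (by norm_num) (abs_nonneg _)
      have h4 : (2:ℝ) ^ (p - 1) ≤ 2 := by
        have := Real.rpow_le_rpow_of_exponent_le (by norm_num : (1:ℝ) ≤ 2)
          (by linarith : p - 1 ≤ 1)
        rwa [Real.rpow_one] at this
      have h5 : |ε| ^ (p - 1) * |ε| = |ε| ^ p := by
        rw [← Real.rpow_add_one (by positivity : |ε| ≠ 0) (p-1)]; norm_num
      have h6 : |spow c (p - 1)| ≤ 2 * |ε| ^ (p - 1) := by
        have hε1 : (0:ℝ) ≤ |ε| ^ (p - 1) := Real.rpow_nonneg (abs_nonneg _) _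
        nlinarith
      have hε1 : (0:ℝ) ≤ |ε| ^ (p - 1) := Real.rpow_nonneg (abs_nonneg _) _
      calc p * |spow c (p - 1)| * |ε| ≤ p * (2 * |ε| ^ (p - 1)) * |ε| := by
            apply mul_le_mul_of_nonneg_right _ (abs_nonneg _)
            exact mul_le_mul_of_nonneg_left h6 (by linarith)
        _ = 2 * p * (|ε| ^ (p - 1) * |ε|) := by ring
        _ = 2 * p * |ε| ^ p := by rw [h5]
    have habs : |(|c - ε| ^ p - |c| ^ p + p * spow c (p - 1) * ε)|
        ≤ |c - ε| ^ p + |c| ^ p + p * |spow c (p - 1)| * |ε| := by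
      have h1 := abs_add_le (|c - ε| ^ p - |c| ^ p) (p * spow c (p - 1) * ε)
      have h2 := abs_sub (|c - ε| ^ p) (|c| ^ p)
      have h3 : |p * spow c (p - 1) * ε| = p * |spow c (p - 1)| * |ε| := by
        rw [abs_mul, abs_mul, abs_of_pos (by linarith : (0:ℝ) < p)]
      have h4 : (0:ℝ) ≤ |c - ε| ^ p := Real.rpow_nonneg (abs_nonneg _) p
      have h5 : (0:ℝ) ≤ |c| ^ p := Real.rpow_nonneg (abs_nonneg _) p
      rw [abs_of_nonneg h4, abs_of_nonneg h5] at h2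
      linarith
    nlinarith

lemma key_ineq {p : ℝ} (hp1 : 1 < p) (hp2 : p < 2) (c ε : ℝ) :
    |(|ε| ^ p + |c| ^ p - |c - ε| ^ p - p * spow c (p - 1) * ε)| ≤ (15 + 3 * p) * |ε| ^ p := by
  have hG := G_bound hp1 hp2 c ε
  have hεp : (0:ℝ) ≤ |ε| ^ p := Real.rpow_nonneg (abs_nonneg _) p
  have : |ε| ^ p + |c| ^ p - |c - ε| ^ p - p * spow c (p - 1) * ε
      = |ε| ^ p - (|c - ε| ^ p - |c| ^ p + p * spow c (p - 1) * ε) := by ring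
  rw [this]
  calc |(|ε| ^ p - (|c - ε| ^ p - |c| ^ p + p * spow c (p - 1) * ε))|
      ≤ |(|ε| ^ p)| + |(|c - ε| ^ p - |c| ^ p + p * spow c (p - 1) * ε)| := abs_sub _ _
    _ ≤ (15 + 3 * p) * |ε| ^ p := by rw [abs_of_nonneg hεp]; nlinarith



instance : OpensMeasurableSpace Sphere2 := Subtype.opensMeasurableSpace _

lemma meas_fst : Measurable fun s : Sphere2 => s.1.1 :=
  (continuous_fst.comp continuous_subtype_val).measurable
lemma meas_snd : Measurable fun s : Sphere2 => s.1.2 :=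
  (continuous_snd.comp continuous_subtype_val).measurable

lemma measurable_A2 (a1 a2 a3 a4 l : ℝ) (j : ℕ) : Measurable (A2 a1 a2 a3 a4 l j) := by
  unfold A2
  exact (((meas_fst.const_mul _).sub (meas_fst.const_mul _)).add
    (meas_fst.const_mul _)).add (meas_snd.const_mul _)

lemma measurable_B2 (a1 a2 a3 a4 l : ℝ) (j : ℕ) : Measurable (B2 a1 a2 a3 a4 l j) := by
  unfold B2
  exact ((meas_fst.const_mul _).sub (meas_fst.const_mul _)).add (meas_snd.const_mul _)

lemma measurable_C2 (a1 a2 a3 a4 l : ℝ) (j : ℕ) : Measurable (C2 a1 a2 a3 a4 l j) := by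
  unfold C2
  exact (((meas_fst.const_mul _).add (meas_snd.const_mul _)).sub
    (meas_snd.const_mul _)).add (meas_snd.const_mul _)

lemma sphere_fst_le (s : Sphere2) : |s.1.1| ≤ 1 := by
  have h := s.2
  nlinarith [sq_abs s.1.1, abs_nonneg s.1.1, sq_nonneg s.1.2, sq_abs s.1.2]

lemma sphere_snd_le (s : Sphere2) : |s.1.2| ≤ 1 := by
  have h := s.2
  nlinarith [sq_abs s.1.2, abs_nonneg s.1.2, sq_nonneg s.1.1]

lemma abs_zpow_eq {l : ℝ} (hl0 : l ≠ 0) (j : ℕ) :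
    |l ^ ((j : ℤ) - 1)| = |l| ^ j / |l| := by
  rw [zpow_sub_one₀ hl0, zpow_natCast, abs_mul, abs_pow, abs_inv, div_eq_mul_inv]

section Bounds
variable {a1 a2 a3 a4 l : ℝ} (hl0 : l ≠ 0)

lemma abs4 (w x y z : ℝ) : |w - x + y + z| ≤ |w| + |x| + |y| + |z| := by
  calc |w - x + y + z| ≤ |w - x + y| + |z| := abs_add_le _ _
    _ ≤ |w - x| + |y| + |z| := by linarith [abs_add_le (w - x) y]
    _ ≤ |w| + |x| + |y| + |z| := by linarith [abs_sub w x]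

include hl0 in
lemma abs_A2_le (j : ℕ) (s : Sphere2) :
    |A2 a1 a2 a3 a4 l j s| ≤ ((j:ℝ) + 1) * ((|a1| + |a2| + |a3| + |a4|) / |l| + 2) * |l| ^ j := by
  have hr0 : (0:ℝ) < |l| := abs_pos.mpr hl0
  have ht : (0:ℝ) < |l| ^ j := pow_pos hr0 j
  have hz := abs_zpow_eq hl0 j
  have h1 : |(j:ℝ) * l ^ ((j : ℤ) - 1) * a1 * s.1.1| ≤ (j:ℝ) * (|l| ^ j / |l|) * |a1| := by
    rw [abs_mul, abs_mul, abs_mul, hz, Nat.abs_cast]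
    exact mul_le_of_le_one_right (by positivity) (sphere_fst_le s)
  have h2 : |(j:ℝ) * l ^ j * s.1.1| ≤ (j:ℝ) * |l| ^ j := by
    rw [abs_mul, abs_mul, Nat.abs_cast, abs_pow]
    exact mul_le_of_le_one_right (by positivity) (sphere_fst_le s)
  have h3 : |l ^ j * s.1.1| ≤ |l| ^ j := by
    rw [abs_mul, abs_pow]
    exact mul_le_of_le_one_right (by positivity) (sphere_fst_le s)
  have h4 : |(j:ℝ) * l ^ ((j : ℤ) - 1) * a2 * s.1.2| ≤ (j:ℝ) * (|l| ^ j / |l|) * |a2| := by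
    rw [abs_mul, abs_mul, abs_mul, hz, Nat.abs_cast]
    exact mul_le_of_le_one_right (by positivity) (sphere_snd_le s)
  have habs := abs4 ((j:ℝ) * l ^ ((j : ℤ) - 1) * a1 * s.1.1) ((j:ℝ) * l ^ j * s.1.1)
    (l ^ j * s.1.1) ((j:ℝ) * l ^ ((j : ℤ) - 1) * a2 * s.1.2)
  have key : (j:ℝ) * (|l| ^ j / |l|) * |a1| + (j:ℝ) * |l| ^ j + |l| ^ j
      + (j:ℝ) * (|l| ^ j / |l|) * |a2|
      ≤ ((j:ℝ) + 1) * ((|a1| + |a2| + |a3| + |a4|) / |l| + 2) * |l| ^ j := by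
    have hj : (0:ℝ) ≤ (j:ℝ) := Nat.cast_nonneg j
    have hq : (0:ℝ) ≤ |l| ^ j / |l| := by positivity
    have l1 : (j:ℝ) * (|a1| + |a2|) ≤ ((j:ℝ)+1) * (|a1| + |a2| + |a3| + |a4|) := by
      nlinarith [abs_nonneg a1, abs_nonneg a2, abs_nonneg a3, abs_nonneg a4]
    have eL : (j:ℝ) * (|l| ^ j / |l|) * |a1| + (j:ℝ) * |l| ^ j + |l| ^ j
        + (j:ℝ) * (|l| ^ j / |l|) * |a2|
        = ((j:ℝ) * (|a1| + |a2|)) * (|l| ^ j / |l|) + ((j:ℝ) + 1) * |l| ^ j := by ring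
    have eR : ((j:ℝ) + 1) * ((|a1| + |a2| + |a3| + |a4|) / |l| + 2) * |l| ^ j
        = (((j:ℝ) + 1) * (|a1| + |a2| + |a3| + |a4|)) * (|l| ^ j / |l|)
          + 2 * (((j:ℝ) + 1) * |l| ^ j) := by ring
    rw [eL, eR]
    have := mul_le_mul_of_nonneg_right l1 hq
    have := mul_nonneg (by positivity : (0:ℝ) ≤ (j:ℝ)+1) ht.le
    linarith
  unfold A2
  linarith
end Bounds

section Bounds2
variable {a1 a2 a3 a4 l : ℝ} (hl0 : l ≠ 0)

lemma abs4' (w x y z : ℝ) : |w + x - y + z| ≤ |w| + |x| + |y| + |z| := by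
  calc |w + x - y + z| ≤ |w + x - y| + |z| := abs_add_le _ _
    _ ≤ |w + x| + |y| + |z| := by linarith [abs_sub (w + x) y]
    _ ≤ |w| + |x| + |y| + |z| := by linarith [abs_add_le w x]

include hl0 in
lemma abs_B2_le (j : ℕ) (s : Sphere2) :
    |B2 a1 a2 a3 a4 l j s| ≤ ((|a1| + |a2| + |a3| + |a4|) / |l| + 2) * |l| ^ j := by
  have hr0 : (0:ℝ) < |l| := abs_pos.mpr hl0
  have ht : (0:ℝ) < |l| ^ j := pow_pos hr0 j
  have hz := abs_zpow_eq hl0 j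
  have h1 : |l ^ ((j : ℤ) - 1) * a1 * s.1.1| ≤ (|l| ^ j / |l|) * |a1| := by
    rw [abs_mul, abs_mul, hz]
    exact mul_le_of_le_one_right (by positivity) (sphere_fst_le s)
  have h2 : |l ^ j * s.1.1| ≤ |l| ^ j := by
    rw [abs_mul, abs_pow]
    exact mul_le_of_le_one_right (by positivity) (sphere_fst_le s)
  have h3 : |l ^ ((j : ℤ) - 1) * a2 * s.1.2| ≤ (|l| ^ j / |l|) * |a2| := by
    rw [abs_mul, abs_mul, hz]
    exact mul_le_of_le_one_right (by positivity) (sphere_snd_le s)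
  have habs : |B2 a1 a2 a3 a4 l j s| ≤ |l ^ ((j : ℤ) - 1) * a1 * s.1.1| + |l ^ j * s.1.1|
      + |l ^ ((j : ℤ) - 1) * a2 * s.1.2| := by
    unfold B2
    calc |l ^ ((j:ℤ)-1) * a1 * s.1.1 - l ^ j * s.1.1 + l ^ ((j:ℤ)-1) * a2 * s.1.2|
        ≤ |l ^ ((j:ℤ)-1) * a1 * s.1.1 - l ^ j * s.1.1| + |l ^ ((j:ℤ)-1) * a2 * s.1.2| :=
          abs_add_le _ _
      _ ≤ _ := by linarith [abs_sub (l ^ ((j:ℤ)-1) * a1 * s.1.1) (l ^ j * s.1.1)]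
  have hq : (0:ℝ) ≤ |l| ^ j / |l| := by positivity
  have eR : ((|a1| + |a2| + |a3| + |a4|) / |l| + 2) * |l| ^ j
      = (|a1| + |a2| + |a3| + |a4|) * (|l| ^ j / |l|) + 2 * |l| ^ j := by ring
  have l1 : (|l| ^ j / |l|) * |a1| + (|l| ^ j / |l|) * |a2|
      ≤ (|a1| + |a2| + |a3| + |a4|) * (|l| ^ j / |l|) := by
    have := mul_le_mul_of_nonneg_right
      (by nlinarith [abs_nonneg a3, abs_nonneg a4] :
        |a1| + |a2| ≤ |a1| + |a2| + |a3| + |a4|) hq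
    nlinarith
  linarith

include hl0 in
lemma abs_C2_le (j : ℕ) (s : Sphere2) :
    |C2 a1 a2 a3 a4 l j s| ≤ ((j:ℝ) + 1) * ((|a1| + |a2| + |a3| + |a4|) / |l| + 2) * |l| ^ j := by
  have hr0 : (0:ℝ) < |l| := abs_pos.mpr hl0
  have ht : (0:ℝ) < |l| ^ j := pow_pos hr0 j
  have hz := abs_zpow_eq hl0 j
  have h1 : |(j:ℝ) * l ^ ((j : ℤ) - 1) * a3 * s.1.1| ≤ (j:ℝ) * (|l| ^ j / |l|) * |a3| := by
    rw [abs_mul, abs_mul, abs_mul, hz, Nat.abs_cast]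
    exact mul_le_of_le_one_right (by positivity) (sphere_fst_le s)
  have h2 : |(j:ℝ) * l ^ ((j : ℤ) - 1) * a4 * s.1.2| ≤ (j:ℝ) * (|l| ^ j / |l|) * |a4| := by
    rw [abs_mul, abs_mul, abs_mul, hz, Nat.abs_cast]
    exact mul_le_of_le_one_right (by positivity) (sphere_snd_le s)
  have h3 : |(j:ℝ) * l ^ j * s.1.2| ≤ (j:ℝ) * |l| ^ j := by
    rw [abs_mul, abs_mul, Nat.abs_cast, abs_pow]
    exact mul_le_of_le_one_right (by positivity) (sphere_snd_le s)
  have h4 : |l ^ j * s.1.2| ≤ |l| ^ j := by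
    rw [abs_mul, abs_pow]
    exact mul_le_of_le_one_right (by positivity) (sphere_snd_le s)
  have habs := abs4' ((j:ℝ) * l ^ ((j : ℤ) - 1) * a3 * s.1.1)
    ((j:ℝ) * l ^ ((j : ℤ) - 1) * a4 * s.1.2) ((j:ℝ) * l ^ j * s.1.2) (l ^ j * s.1.2)
  have hq : (0:ℝ) ≤ |l| ^ j / |l| := by positivity
  have l1 : (j:ℝ) * (|a3| + |a4|) ≤ ((j:ℝ)+1) * (|a1| + |a2| + |a3| + |a4|) := by
    have hj : (0:ℝ) ≤ (j:ℝ) := Nat.cast_nonneg j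
    nlinarith [abs_nonneg a1, abs_nonneg a2, abs_nonneg a3, abs_nonneg a4]
  have eL : (j:ℝ) * (|l| ^ j / |l|) * |a3| + (j:ℝ) * (|l| ^ j / |l|) * |a4|
      + (j:ℝ) * |l| ^ j + |l| ^ j
      = ((j:ℝ) * (|a3| + |a4|)) * (|l| ^ j / |l|) + ((j:ℝ) + 1) * |l| ^ j := by ring
  have eR : ((j:ℝ) + 1) * ((|a1| + |a2| + |a3| + |a4|) / |l| + 2) * |l| ^ j
      = (((j:ℝ) + 1) * (|a1| + |a2| + |a3| + |a4|)) * (|l| ^ j / |l|)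
        + 2 * (((j:ℝ) + 1) * |l| ^ j) := by ring
  have hm := mul_le_mul_of_nonneg_right l1 hq
  have hnn := mul_nonneg (by positivity : (0:ℝ) ≤ (j:ℝ)+1) ht.le
  unfold C2
  linarith
end Bounds2

lemma measurable_spow {p : ℝ} (hp : 0 ≤ p) : Measurable fun x : ℝ => spow x p := by
  unfold spow
  apply Measurable.mul
  · exact ((Real.continuous_rpow_const hp).comp continuous_abs).measurable
  · unfold Real.sign
    exact Measurable.ite (measurableSet_lt measurable_id measurable_const) measurable_const
      (Measurable.ite (measurableSet_lt measurable_const measurable_id) measurable_const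
        measurable_const)

lemma summable_aux {r : ℝ} (hr0 : 0 < r) (hr1 : r < 1) (k : ℕ) :
    Summable fun j : ℕ => ((j:ℝ) + 1) ^ k * r ^ j := by
  have h := summable_pow_mul_geometric_of_norm_lt_one (R := ℝ) k
    (r := r) (by rw [Real.norm_eq_abs, abs_of_pos hr0]; exact hr1)
  have h2 := (summable_nat_add_iff (f := fun n : ℕ => (n:ℝ) ^ k * r ^ n) 1).mpr h
  have h3 : (fun n : ℕ => r * (((n:ℝ) + 1) ^ k * r ^ n))
      = fun n : ℕ => ((n + 1 : ℕ):ℝ) ^ k * r ^ (n + 1) := by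
    funext n; push_cast; ring
  rw [← h3] at h2
  exact (summable_mul_left_iff hr0.ne').mp h2

lemma integrable_of_bound {Γ : Measure Sphere2} [IsFiniteMeasure Γ] {f : Sphere2 → ℝ} {c : ℝ}
    (hm : Measurable f) (hb : ∀ s, |f s| ≤ c) : Integrable f Γ :=
  (integrable_const c).mono' hm.aestronglyMeasurable
    (ae_of_all _ fun s => by rw [Real.norm_eq_abs]; exact hb s)

lemma abs_integral_le {Γ : Measure Sphere2} [IsFiniteMeasure Γ] {f : Sphere2 → ℝ} {c : ℝ}
    (hb : ∀ s, |f s| ≤ c) : |∫ s, f s ∂Γ| ≤ c * (Γ Set.univ).toReal := by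
  have := norm_integral_le_of_norm_le_const (μ := Γ) (f := f)
    (ae_of_all _ fun s => by rw [Real.norm_eq_abs]; exact hb s)
  rwa [Real.norm_eq_abs] at this

/-! ### middle layer -/

noncomputable def Mc (a1 a2 a3 a4 l : ℝ) : ℝ := (|a1| + |a2| + |a3| + |a4|) / |l| + 2

noncomputable def uu (Γ : Measure Sphere2) (α a1 a2 a3 a4 l : ℝ) (j : ℕ) : ℝ :=
  ∫ s, A2 a1 a2 a3 a4 l j s * spow (C2 a1 a2 a3 a4 l j s) (α - 1) ∂Γ

noncomputable def vv (Γ : Measure Sphere2) (α a1 a2 a3 a4 l : ℝ) (j : ℕ) : ℝ :=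
  ∫ s, B2 a1 a2 a3 a4 l j s * spow (C2 a1 a2 a3 a4 l j s) (α - 1) ∂Γ

noncomputable def epsf (a1 a2 a3 a4 l : ℝ) (h j : ℕ) (s : Sphere2) : ℝ :=
  l ^ h * A2 a1 a2 a3 a4 l j s + (h : ℝ) * l ^ h * B2 a1 a2 a3 a4 l j s

noncomputable def ww (Γ : Measure Sphere2) (α a1 a2 a3 a4 l : ℝ) (h j : ℕ) : ℝ :=
  ∫ s, ((|epsf a1 a2 a3 a4 l h j s| ^ α + |C2 a1 a2 a3 a4 l j s| ^ α
      - |C2 a1 a2 a3 a4 l j s - epsf a1 a2 a3 a4 l h j s| ^ α)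
    - α * (spow (C2 a1 a2 a3 a4 l j s) (α - 1) * epsf a1 a2 a3 a4 l h j s)) ∂Γ

section MainAux
variable {Γ : Measure Sphere2} [IsFiniteMeasure Γ] {α a1 a2 a3 a4 l : ℝ}

lemma E3_eq : E3 Γ α a1 a2 a3 a4 l = ∑' j, uu Γ α a1 a2 a3 a4 l j := rfl
lemma D3_eq : D3 Γ α a1 a2 a3 a4 l = ∑' j, vv Γ α a1 a2 a3 a4 l j := rfl

lemma CVneg'_eq (h : ℕ) : CVneg' Γ α a1 a2 a3 a4 l h
    = ∑' j, ∫ s, spow (C2 a1 a2 a3 a4 l j s) (α - 1) * epsf a1 a2 a3 a4 l h j s ∂Γ := rfl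

lemma CDneg'_eq (h : ℕ) : CDneg' Γ α a1 a2 a3 a4 l h
    = ∑' j, ∫ s, (|epsf a1 a2 a3 a4 l h j s| ^ α + |C2 a1 a2 a3 a4 l j s| ^ α
      - |C2 a1 a2 a3 a4 l j s - epsf a1 a2 a3 a4 l h j s| ^ α) ∂Γ := rfl

lemma Mc_ge_one : 1 ≤ Mc a1 a2 a3 a4 l := by
  unfold Mc
  have : (0:ℝ) ≤ (|a1| + |a2| + |a3| + |a4|) / |l| := by positivity
  linarith

lemma Mc_pos : 0 < Mc a1 a2 a3 a4 l := lt_of_lt_of_le one_pos Mc_ge_one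

lemma abs_A2_le' (hl0 : l ≠ 0) (j : ℕ) (s : Sphere2) :
    |A2 a1 a2 a3 a4 l j s| ≤ ((j:ℝ) + 1) * Mc a1 a2 a3 a4 l * |l| ^ j := by
  unfold Mc; exact abs_A2_le hl0 j s

lemma abs_B2_le' (hl0 : l ≠ 0) (j : ℕ) (s : Sphere2) :
    |B2 a1 a2 a3 a4 l j s| ≤ Mc a1 a2 a3 a4 l * |l| ^ j := by
  unfold Mc; exact abs_B2_le hl0 j s

lemma abs_C2_le' (hl0 : l ≠ 0) (j : ℕ) (s : Sphere2) :
    |C2 a1 a2 a3 a4 l j s| ≤ ((j:ℝ) + 1) * Mc a1 a2 a3 a4 l * |l| ^ j := by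
  unfold Mc; exact abs_C2_le hl0 j s

lemma measurable_epsf (h j : ℕ) : Measurable (epsf a1 a2 a3 a4 l h j) := by
  unfold epsf
  exact ((measurable_A2 a1 a2 a3 a4 l j).const_mul _).add
    ((measurable_B2 a1 a2 a3 a4 l j).const_mul _)

lemma measurable_spowC2 (hα1 : 1 < α) (j : ℕ) :
    Measurable fun s => spow (C2 a1 a2 a3 a4 l j s) (α - 1) :=
  (measurable_spow (by linarith : (0:ℝ) ≤ α - 1)).comp (measurable_C2 a1 a2 a3 a4 l j)

lemma abs_spowC2_le (hl0 : l ≠ 0) (habs : |l| < 1) (hα1 : 1 < α) (hα2 : α < 2)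
    (j : ℕ) (s : Sphere2) :
    |spow (C2 a1 a2 a3 a4 l j s) (α - 1)| ≤ (1 + Mc a1 a2 a3 a4 l) * ((j:ℝ) + 1) := by
  have hr0 : (0:ℝ) < |l| := abs_pos.mpr hl0
  have hpow1 : |l| ^ j ≤ 1 := pow_le_one₀ hr0.le habs.le
  have hMc := @Mc_ge_one a1 a2 a3 a4 l
  have hj1 : (1:ℝ) ≤ (j:ℝ) + 1 := by
    have : (0:ℝ) ≤ (j:ℝ) := Nat.cast_nonneg j
    linarith
  calc |spow (C2 a1 a2 a3 a4 l j s) (α - 1)| ≤ |C2 a1 a2 a3 a4 l j s| ^ (α - 1) :=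
        abs_spow_le _ _
    _ ≤ 1 + |C2 a1 a2 a3 a4 l j s| :=
        rpow_le_one_add (abs_nonneg _) (by linarith) (by linarith)
    _ ≤ 1 + ((j:ℝ) + 1) * Mc a1 a2 a3 a4 l * |l| ^ j := by
        linarith [abs_C2_le' (a1 := a1) (a2 := a2) (a3 := a3) (a4 := a4) hl0 j s]
    _ ≤ 1 + ((j:ℝ) + 1) * Mc a1 a2 a3 a4 l := by
        nlinarith [pow_pos hr0 j, mul_nonneg (by positivity : (0:ℝ) ≤ ((j:ℝ)+1))
          (by linarith : (0:ℝ) ≤ Mc a1 a2 a3 a4 l)]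
    _ ≤ (1 + Mc a1 a2 a3 a4 l) * ((j:ℝ) + 1) := by nlinarith

lemma bnd_uu (hl0 : l ≠ 0) (habs : |l| < 1) (hα1 : 1 < α) (hα2 : α < 2) (j : ℕ) (s : Sphere2) :
    |A2 a1 a2 a3 a4 l j s * spow (C2 a1 a2 a3 a4 l j s) (α - 1)|
      ≤ (Mc a1 a2 a3 a4 l * (1 + Mc a1 a2 a3 a4 l)) * (((j:ℝ) + 1) ^ 2 * |l| ^ j) := by
  rw [abs_mul]
  have h1 := abs_A2_le' (a1 := a1) (a2 := a2) (a3 := a3) (a4 := a4) hl0 j s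
  have h2 := abs_spowC2_le (a1 := a1) (a2 := a2) (a3 := a3) (a4 := a4) hl0 habs hα1 hα2 j s
  have hMc := @Mc_pos a1 a2 a3 a4 l
  have hj0 : (0:ℝ) ≤ (j:ℝ) := Nat.cast_nonneg j
  have hnn : (0:ℝ) ≤ ((j:ℝ) + 1) * Mc a1 a2 a3 a4 l * |l| ^ j :=
    mul_nonneg (mul_nonneg (by linarith) hMc.le) (pow_nonneg (abs_nonneg l) j)
  have := mul_le_mul h1 h2 (abs_nonneg _) hnn
  calc |A2 a1 a2 a3 a4 l j s| * |spow (C2 a1 a2 a3 a4 l j s) (α - 1)|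
      ≤ (((j:ℝ) + 1) * Mc a1 a2 a3 a4 l * |l| ^ j) * ((1 + Mc a1 a2 a3 a4 l) * ((j:ℝ) + 1)) :=
        this
    _ = (Mc a1 a2 a3 a4 l * (1 + Mc a1 a2 a3 a4 l)) * (((j:ℝ) + 1) ^ 2 * |l| ^ j) := by ring

lemma bnd_vv (hl0 : l ≠ 0) (habs : |l| < 1) (hα1 : 1 < α) (hα2 : α < 2) (j : ℕ) (s : Sphere2) :
    |B2 a1 a2 a3 a4 l j s * spow (C2 a1 a2 a3 a4 l j s) (α - 1)|
      ≤ (Mc a1 a2 a3 a4 l * (1 + Mc a1 a2 a3 a4 l)) * (((j:ℝ) + 1) ^ 2 * |l| ^ j) := by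
  rw [abs_mul]
  have h1 := abs_B2_le' (a1 := a1) (a2 := a2) (a3 := a3) (a4 := a4) hl0 j s
  have h2 := abs_spowC2_le (a1 := a1) (a2 := a2) (a3 := a3) (a4 := a4) hl0 habs hα1 hα2 j s
  have hMc := @Mc_pos a1 a2 a3 a4 l
  have hj0 : (0:ℝ) ≤ (j:ℝ) := Nat.cast_nonneg j
  have ht : (0:ℝ) ≤ |l| ^ j := pow_nonneg (abs_nonneg l) j
  have hnn : (0:ℝ) ≤ Mc a1 a2 a3 a4 l * |l| ^ j := mul_nonneg hMc.le ht
  have h3 := mul_le_mul h1 h2 (abs_nonneg _) hnn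
  have hprod : (0:ℝ) ≤ Mc a1 a2 a3 a4 l * (1 + Mc a1 a2 a3 a4 l) * |l| ^ j
      * ((j:ℝ) * ((j:ℝ) + 1)) :=
    mul_nonneg (mul_nonneg (mul_nonneg hMc.le (by linarith)) ht)
      (mul_nonneg hj0 (by linarith))
  calc |B2 a1 a2 a3 a4 l j s| * |spow (C2 a1 a2 a3 a4 l j s) (α - 1)|
      ≤ (Mc a1 a2 a3 a4 l * |l| ^ j) * ((1 + Mc a1 a2 a3 a4 l) * ((j:ℝ) + 1)) := h3
    _ ≤ (Mc a1 a2 a3 a4 l * (1 + Mc a1 a2 a3 a4 l)) * (((j:ℝ) + 1) ^ 2 * |l| ^ j) := by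
        nlinarith [hprod]

lemma int_uu (hl0 : l ≠ 0) (habs : |l| < 1) (hα1 : 1 < α) (hα2 : α < 2) (j : ℕ) :
    Integrable (fun s => A2 a1 a2 a3 a4 l j s * spow (C2 a1 a2 a3 a4 l j s) (α - 1)) Γ :=
  integrable_of_bound ((measurable_A2 a1 a2 a3 a4 l j).mul (measurable_spowC2 hα1 j))
    (bnd_uu (a1 := a1) (a2 := a2) (a3 := a3) (a4 := a4) hl0 habs hα1 hα2 j)

lemma int_vv (hl0 : l ≠ 0) (habs : |l| < 1) (hα1 : 1 < α) (hα2 : α < 2) (j : ℕ) :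
    Integrable (fun s => B2 a1 a2 a3 a4 l j s * spow (C2 a1 a2 a3 a4 l j s) (α - 1)) Γ :=
  integrable_of_bound ((measurable_B2 a1 a2 a3 a4 l j).mul (measurable_spowC2 hα1 j))
    (bnd_vv (a1 := a1) (a2 := a2) (a3 := a3) (a4 := a4) hl0 habs hα1 hα2 j)

lemma summable_uu (hl0 : l ≠ 0) (habs : |l| < 1) (hα1 : 1 < α) (hα2 : α < 2) :
    Summable (uu Γ α a1 a2 a3 a4 l) := by
  have hr0 : (0:ℝ) < |l| := abs_pos.mpr hl0
  apply Summable.of_norm_bounded (g := fun j : ℕ => ((Mc a1 a2 a3 a4 l * (1 + Mc a1 a2 a3 a4 l)) * (Γ Set.univ).toReal)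
      * (((j:ℝ) + 1) ^ 2 * |l| ^ j))
    ((summable_aux hr0 habs 2).mul_left _)
  intro j
  rw [Real.norm_eq_abs]
  have := abs_integral_le (Γ := Γ) (bnd_uu (a1 := a1) (a2 := a2) (a3 := a3) (a4 := a4)
    hl0 habs hα1 hα2 j)
  calc |uu Γ α a1 a2 a3 a4 l j|
      ≤ (Mc a1 a2 a3 a4 l * (1 + Mc a1 a2 a3 a4 l)) * (((j:ℝ) + 1) ^ 2 * |l| ^ j)
        * (Γ Set.univ).toReal := this
    _ = ((Mc a1 a2 a3 a4 l * (1 + Mc a1 a2 a3 a4 l)) * (Γ Set.univ).toReal)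
        * (((j:ℝ) + 1) ^ 2 * |l| ^ j) := by ring

lemma summable_vv (hl0 : l ≠ 0) (habs : |l| < 1) (hα1 : 1 < α) (hα2 : α < 2) :
    Summable (vv Γ α a1 a2 a3 a4 l) := by
  have hr0 : (0:ℝ) < |l| := abs_pos.mpr hl0
  apply Summable.of_norm_bounded (g := fun j : ℕ => ((Mc a1 a2 a3 a4 l * (1 + Mc a1 a2 a3 a4 l)) * (Γ Set.univ).toReal)
      * (((j:ℝ) + 1) ^ 2 * |l| ^ j))
    ((summable_aux hr0 habs 2).mul_left _)
  intro j
  rw [Real.norm_eq_abs]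
  have := abs_integral_le (Γ := Γ) (bnd_vv (a1 := a1) (a2 := a2) (a3 := a3) (a4 := a4)
    hl0 habs hα1 hα2 j)
  calc |vv Γ α a1 a2 a3 a4 l j|
      ≤ (Mc a1 a2 a3 a4 l * (1 + Mc a1 a2 a3 a4 l)) * (((j:ℝ) + 1) ^ 2 * |l| ^ j)
        * (Γ Set.univ).toReal := this
    _ = ((Mc a1 a2 a3 a4 l * (1 + Mc a1 a2 a3 a4 l)) * (Γ Set.univ).toReal)
        * (((j:ℝ) + 1) ^ 2 * |l| ^ j) := by ring

lemma cv_step (hl0 : l ≠ 0) (habs : |l| < 1) (hα1 : 1 < α) (hα2 : α < 2) (h j : ℕ) :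
    (∫ s, spow (C2 a1 a2 a3 a4 l j s) (α - 1) * epsf a1 a2 a3 a4 l h j s ∂Γ)
      = l ^ h * uu Γ α a1 a2 a3 a4 l j + ((h:ℝ) * l ^ h) * vv Γ α a1 a2 a3 a4 l j := by
  have heq : (fun s => spow (C2 a1 a2 a3 a4 l j s) (α - 1) * epsf a1 a2 a3 a4 l h j s)
      = fun s => l ^ h * (A2 a1 a2 a3 a4 l j s * spow (C2 a1 a2 a3 a4 l j s) (α - 1))
        + ((h:ℝ) * l ^ h) * (B2 a1 a2 a3 a4 l j s * spow (C2 a1 a2 a3 a4 l j s) (α - 1)) := by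
    funext s; unfold epsf; ring
  rw [heq, integral_add ((int_uu hl0 habs hα1 hα2 j).const_mul _)
    ((int_vv hl0 habs hα1 hα2 j).const_mul _), integral_const_mul, integral_const_mul]
  rfl
end MainAux

section MainAux2
variable {Γ : Measure Sphere2} [IsFiniteMeasure Γ] {α a1 a2 a3 a4 l : ℝ}

lemma CV_formula (hl0 : l ≠ 0) (habs : |l| < 1) (hα1 : 1 < α) (hα2 : α < 2) (h : ℕ) :
    CVneg' Γ α a1 a2 a3 a4 l h
      = l ^ h * E3 Γ α a1 a2 a3 a4 l + ((h:ℝ) * l ^ h) * D3 Γ α a1 a2 a3 a4 l := by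
  rw [CVneg'_eq, E3_eq, D3_eq]
  rw [tsum_congr (fun j => cv_step (Γ := Γ) (α := α) (a1 := a1) (a2 := a2) (a3 := a3)
    (a4 := a4) hl0 habs hα1 hα2 h j)]
  rw [Summable.tsum_add ((summable_uu hl0 habs hα1 hα2).mul_left _)
    ((summable_vv hl0 habs hα1 hα2).mul_left _), tsum_mul_left, tsum_mul_left]

lemma abs_epsf_le (hl0 : l ≠ 0) (h j : ℕ) (s : Sphere2) :
    |epsf a1 a2 a3 a4 l h j s|
      ≤ ((h:ℝ) + 1) * Mc a1 a2 a3 a4 l * |l| ^ h * (((j:ℝ) + 1) * |l| ^ j) := by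
  have hA := abs_A2_le' (a1 := a1) (a2 := a2) (a3 := a3) (a4 := a4) hl0 j s
  have hB := abs_B2_le' (a1 := a1) (a2 := a2) (a3 := a3) (a4 := a4) hl0 j s
  have hMc := @Mc_pos a1 a2 a3 a4 l
  have hj0 : (0:ℝ) ≤ (j:ℝ) := Nat.cast_nonneg j
  have hh0 : (0:ℝ) ≤ (h:ℝ) := Nat.cast_nonneg h
  have ht : (0:ℝ) ≤ |l| ^ j := pow_nonneg (abs_nonneg l) j
  have hth : (0:ℝ) ≤ |l| ^ h := pow_nonneg (abs_nonneg l) h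
  have e1 : |l ^ h * A2 a1 a2 a3 a4 l j s| ≤ |l| ^ h * (((j:ℝ) + 1) * Mc a1 a2 a3 a4 l * |l| ^ j) := by
    rw [abs_mul, abs_pow]
    exact mul_le_mul_of_nonneg_left hA hth
  have e2 : |(h:ℝ) * l ^ h * B2 a1 a2 a3 a4 l j s| ≤ (h:ℝ) * |l| ^ h * (Mc a1 a2 a3 a4 l * |l| ^ j) := by
    rw [abs_mul, abs_mul, Nat.abs_cast, abs_pow]
    exact mul_le_mul_of_nonneg_left hB (by positivity)
  have habs2 : |epsf a1 a2 a3 a4 l h j s| ≤ |l ^ h * A2 a1 a2 a3 a4 l j s|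
      + |(h:ℝ) * l ^ h * B2 a1 a2 a3 a4 l j s| := by
    unfold epsf; exact abs_add_le _ _
  have hprod : (0:ℝ) ≤ Mc a1 a2 a3 a4 l * |l| ^ h * |l| ^ j * ((h:ℝ) * (j:ℝ)) :=
    mul_nonneg (mul_nonneg (mul_nonneg hMc.le hth) ht) (mul_nonneg hh0 hj0)
  nlinarith [hprod]

lemma measurable_cdint (hα1 : 1 < α) (h j : ℕ) :
    Measurable (fun s => |epsf a1 a2 a3 a4 l h j s| ^ α + |C2 a1 a2 a3 a4 l j s| ^ α
      - |C2 a1 a2 a3 a4 l j s - epsf a1 a2 a3 a4 l h j s| ^ α) := by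
  have hα0 : (0:ℝ) ≤ α := by linarith
  have m1 : Measurable fun s : Sphere2 => |epsf a1 a2 a3 a4 l h j s| ^ α :=
    (Real.continuous_rpow_const hα0).measurable.comp (measurable_epsf h j).abs
  have m2 : Measurable fun s : Sphere2 => |C2 a1 a2 a3 a4 l j s| ^ α :=
    (Real.continuous_rpow_const hα0).measurable.comp (measurable_C2 a1 a2 a3 a4 l j).abs
  have m3 : Measurable fun s : Sphere2 => |C2 a1 a2 a3 a4 l j s - epsf a1 a2 a3 a4 l h j s| ^ α :=
    (Real.continuous_rpow_const hα0).measurable.comp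
      ((measurable_C2 a1 a2 a3 a4 l j).sub (measurable_epsf h j)).abs
  exact (m1.add m2).sub m3

lemma rho_bound (hl0 : l ≠ 0) (habs : |l| < 1) (hα1 : 1 < α) (hα2 : α < 2) (h j : ℕ)
    (s : Sphere2) :
    |(|epsf a1 a2 a3 a4 l h j s| ^ α + |C2 a1 a2 a3 a4 l j s| ^ α
        - |C2 a1 a2 a3 a4 l j s - epsf a1 a2 a3 a4 l h j s| ^ α)
      - α * (spow (C2 a1 a2 a3 a4 l j s) (α - 1) * epsf a1 a2 a3 a4 l h j s)|
      ≤ (15 + 3 * α)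
        * (((h:ℝ) + 1) * Mc a1 a2 a3 a4 l * |l| ^ h * (((j:ℝ) + 1) * |l| ^ j)) ^ α := by
  have hk := key_ineq hα1 hα2 (C2 a1 a2 a3 a4 l j s) (epsf a1 a2 a3 a4 l h j s)
  rw [show (|epsf a1 a2 a3 a4 l h j s| ^ α + |C2 a1 a2 a3 a4 l j s| ^ α
        - |C2 a1 a2 a3 a4 l j s - epsf a1 a2 a3 a4 l h j s| ^ α)
      - α * (spow (C2 a1 a2 a3 a4 l j s) (α - 1) * epsf a1 a2 a3 a4 l h j s)
    = |epsf a1 a2 a3 a4 l h j s| ^ α + |C2 a1 a2 a3 a4 l j s| ^ α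
        - |C2 a1 a2 a3 a4 l j s - epsf a1 a2 a3 a4 l h j s| ^ α
      - α * spow (C2 a1 a2 a3 a4 l j s) (α - 1) * epsf a1 a2 a3 a4 l h j s by ring]
  refine hk.trans ?_
  have h1 : |epsf a1 a2 a3 a4 l h j s| ^ α
      ≤ (((h:ℝ) + 1) * Mc a1 a2 a3 a4 l * |l| ^ h * (((j:ℝ) + 1) * |l| ^ j)) ^ α :=
    Real.rpow_le_rpow (abs_nonneg _) (abs_epsf_le hl0 h j s) (by linarith)
  exact mul_le_mul_of_nonneg_left h1 (by linarith)

lemma int_cvint (hl0 : l ≠ 0) (habs : |l| < 1) (hα1 : 1 < α) (hα2 : α < 2) (h j : ℕ) :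
    Integrable (fun s => spow (C2 a1 a2 a3 a4 l j s) (α - 1) * epsf a1 a2 a3 a4 l h j s) Γ := by
  have heq : (fun s => spow (C2 a1 a2 a3 a4 l j s) (α - 1) * epsf a1 a2 a3 a4 l h j s)
      = fun s => l ^ h * (A2 a1 a2 a3 a4 l j s * spow (C2 a1 a2 a3 a4 l j s) (α - 1))
        + ((h:ℝ) * l ^ h) * (B2 a1 a2 a3 a4 l j s * spow (C2 a1 a2 a3 a4 l j s) (α - 1)) := by
    funext s; unfold epsf; ring
  rw [heq]
  exact ((int_uu hl0 habs hα1 hα2 j).const_mul _).add ((int_vv hl0 habs hα1 hα2 j).const_mul _)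

lemma int_rho (hl0 : l ≠ 0) (habs : |l| < 1) (hα1 : 1 < α) (hα2 : α < 2) (h j : ℕ) :
    Integrable (fun s => (|epsf a1 a2 a3 a4 l h j s| ^ α + |C2 a1 a2 a3 a4 l j s| ^ α
        - |C2 a1 a2 a3 a4 l j s - epsf a1 a2 a3 a4 l h j s| ^ α)
      - α * (spow (C2 a1 a2 a3 a4 l j s) (α - 1) * epsf a1 a2 a3 a4 l h j s)) Γ :=
  integrable_of_bound ((measurable_cdint hα1 h j).sub
      (((measurable_spowC2 hα1 j).mul (measurable_epsf h j)).const_mul α))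
    (rho_bound hl0 habs hα1 hα2 h j)

noncomputable def ccf (l : ℝ) (j : ℕ) : ℝ :=
  ((j:ℝ) + 1) * |l| ^ j + ((j:ℝ) + 1) ^ 2 * (|l| ^ 2) ^ j

lemma ccf_nonneg (l : ℝ) (j : ℕ) : 0 ≤ ccf l j := by
  unfold ccf; positivity

lemma summable_ccf (hl0 : l ≠ 0) (habs : |l| < 1) : Summable (ccf l) := by
  have hr0 : (0:ℝ) < |l| := abs_pos.mpr hl0
  unfold ccf
  refine Summable.add ?_ ?_
  · exact (summable_aux hr0 habs 1).congr (fun j => by rw [pow_one])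
  · exact summable_aux (pow_pos hr0 2) (by nlinarith [abs_nonneg l]) 2

lemma ww_bound (hl0 : l ≠ 0) (habs : |l| < 1) (hα1 : 1 < α) (hα2 : α < 2) (h j : ℕ) :
    |ww Γ α a1 a2 a3 a4 l h j|
      ≤ ((15 + 3 * α) * (Γ Set.univ).toReal
          * (((h:ℝ) + 1) * Mc a1 a2 a3 a4 l * |l| ^ h) ^ α) * ccf l j := by
  have hMc := @Mc_pos a1 a2 a3 a4 l
  have hA0 : (0:ℝ) ≤ ((h:ℝ) + 1) * Mc a1 a2 a3 a4 l * |l| ^ h := by positivity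
  have hB0 : (0:ℝ) ≤ ((j:ℝ) + 1) * |l| ^ j := by positivity
  have h1 : |ww Γ α a1 a2 a3 a4 l h j|
      ≤ (15 + 3 * α)
        * (((h:ℝ) + 1) * Mc a1 a2 a3 a4 l * |l| ^ h * (((j:ℝ) + 1) * |l| ^ j)) ^ α
        * (Γ Set.univ).toReal :=
    abs_integral_le (rho_bound hl0 habs hα1 hα2 h j)
  have h2 : (((h:ℝ) + 1) * Mc a1 a2 a3 a4 l * |l| ^ h * (((j:ℝ) + 1) * |l| ^ j)) ^ α
      = (((h:ℝ) + 1) * Mc a1 a2 a3 a4 l * |l| ^ h) ^ α * ((((j:ℝ) + 1) * |l| ^ j)) ^ α :=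
    Real.mul_rpow hA0 hB0
  have h3 : ((((j:ℝ) + 1) * |l| ^ j)) ^ α ≤ ccf l j := by
    have := rpow_le_add_sq hB0 hα1.le hα2.le
    have e : (((j:ℝ) + 1) * |l| ^ j) ^ 2 = ((j:ℝ) + 1) ^ 2 * (|l| ^ 2) ^ j := by
      rw [mul_pow, ← pow_mul, ← pow_mul, Nat.mul_comm]
    unfold ccf; rw [← e]; linarith
  have hApow : (0:ℝ) ≤ (((h:ℝ) + 1) * Mc a1 a2 a3 a4 l * |l| ^ h) ^ α :=
    Real.rpow_nonneg hA0 α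
  have hΓ0 : (0:ℝ) ≤ (Γ Set.univ).toReal := ENNReal.toReal_nonneg
  calc |ww Γ α a1 a2 a3 a4 l h j|
      ≤ (15 + 3 * α)
        * (((h:ℝ) + 1) * Mc a1 a2 a3 a4 l * |l| ^ h * (((j:ℝ) + 1) * |l| ^ j)) ^ α
        * (Γ Set.univ).toReal := h1
    _ = ((15 + 3 * α) * (Γ Set.univ).toReal * (((h:ℝ) + 1) * Mc a1 a2 a3 a4 l * |l| ^ h) ^ α)
        * ((((j:ℝ) + 1) * |l| ^ j)) ^ α := by rw [h2]; ring
    _ ≤ ((15 + 3 * α) * (Γ Set.univ).toReal * (((h:ℝ) + 1) * Mc a1 a2 a3 a4 l * |l| ^ h) ^ α)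
        * ccf l j := by
        apply mul_le_mul_of_nonneg_left h3
        positivity

lemma summable_ww (hl0 : l ≠ 0) (habs : |l| < 1) (hα1 : 1 < α) (hα2 : α < 2) (h : ℕ) :
    Summable (fun j => ww Γ α a1 a2 a3 a4 l h j) :=
  Summable.of_norm_bounded ((summable_ccf hl0 habs).mul_left _)
    (fun j => by rw [Real.norm_eq_abs]; exact ww_bound hl0 habs hα1 hα2 h j)

lemma W_bound (hl0 : l ≠ 0) (habs : |l| < 1) (hα1 : 1 < α) (hα2 : α < 2) (h : ℕ) :
    |∑' j, ww Γ α a1 a2 a3 a4 l h j|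
      ≤ ((15 + 3 * α) * (Γ Set.univ).toReal * (∑' j, ccf l j))
        * (((h:ℝ) + 1) * Mc a1 a2 a3 a4 l * |l| ^ h) ^ α := by
  have hsn : Summable (fun j => |ww Γ α a1 a2 a3 a4 l h j|) :=
    Summable.of_norm_bounded ((summable_ccf hl0 habs).mul_left _)
      (fun j => by rw [Real.norm_eq_abs, abs_abs]; exact ww_bound hl0 habs hα1 hα2 h j)
  have h1 : |∑' j, ww Γ α a1 a2 a3 a4 l h j| ≤ ∑' j, |ww Γ α a1 a2 a3 a4 l h j| := by
    have := norm_tsum_le_tsum_norm (f := fun j => ww Γ α a1 a2 a3 a4 l h j)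
      (by simpa [Real.norm_eq_abs] using hsn)
    simpa [Real.norm_eq_abs] using this
  have h2 : ∑' j, |ww Γ α a1 a2 a3 a4 l h j|
      ≤ ∑' j, ((15 + 3 * α) * (Γ Set.univ).toReal
          * (((h:ℝ) + 1) * Mc a1 a2 a3 a4 l * |l| ^ h) ^ α) * ccf l j :=
    Summable.tsum_le_tsum (fun j => ww_bound hl0 habs hα1 hα2 h j) hsn
      ((summable_ccf hl0 habs).mul_left _)
  rw [tsum_mul_left] at h2
  calc |∑' j, ww Γ α a1 a2 a3 a4 l h j| ≤ ∑' j, |ww Γ α a1 a2 a3 a4 l h j| := h1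
    _ ≤ ((15 + 3 * α) * (Γ Set.univ).toReal
          * (((h:ℝ) + 1) * Mc a1 a2 a3 a4 l * |l| ^ h) ^ α) * ∑' j, ccf l j := h2
    _ = ((15 + 3 * α) * (Γ Set.univ).toReal * (∑' j, ccf l j))
        * (((h:ℝ) + 1) * Mc a1 a2 a3 a4 l * |l| ^ h) ^ α := by ring

lemma summable_cvint (hl0 : l ≠ 0) (habs : |l| < 1) (hα1 : 1 < α) (hα2 : α < 2) (h : ℕ) :
    Summable (fun j => ∫ s, spow (C2 a1 a2 a3 a4 l j s) (α - 1) * epsf a1 a2 a3 a4 l h j s ∂Γ) :=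
  Summable.congr (((summable_uu hl0 habs hα1 hα2).mul_left (l ^ h)).add
      ((summable_vv hl0 habs hα1 hα2).mul_left ((h:ℝ) * l ^ h)))
    (fun j => (cv_step hl0 habs hα1 hα2 h j).symm)

lemma CD_decomp (hl0 : l ≠ 0) (habs : |l| < 1) (hα1 : 1 < α) (hα2 : α < 2) (h : ℕ) :
    CDneg' Γ α a1 a2 a3 a4 l h
      = α * CVneg' Γ α a1 a2 a3 a4 l h + ∑' j, ww Γ α a1 a2 a3 a4 l h j := by
  rw [CDneg'_eq, CVneg'_eq]
  have step : ∀ j : ℕ, (∫ s, (|epsf a1 a2 a3 a4 l h j s| ^ α + |C2 a1 a2 a3 a4 l j s| ^ α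
        - |C2 a1 a2 a3 a4 l j s - epsf a1 a2 a3 a4 l h j s| ^ α) ∂Γ)
      = α * (∫ s, spow (C2 a1 a2 a3 a4 l j s) (α - 1) * epsf a1 a2 a3 a4 l h j s ∂Γ)
        + ww Γ α a1 a2 a3 a4 l h j := by
    intro j
    have heq : (fun s => |epsf a1 a2 a3 a4 l h j s| ^ α + |C2 a1 a2 a3 a4 l j s| ^ α
          - |C2 a1 a2 a3 a4 l j s - epsf a1 a2 a3 a4 l h j s| ^ α)
        = fun s => α * (spow (C2 a1 a2 a3 a4 l j s) (α - 1) * epsf a1 a2 a3 a4 l h j s)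
          + ((|epsf a1 a2 a3 a4 l h j s| ^ α + |C2 a1 a2 a3 a4 l j s| ^ α
              - |C2 a1 a2 a3 a4 l j s - epsf a1 a2 a3 a4 l h j s| ^ α)
            - α * (spow (C2 a1 a2 a3 a4 l j s) (α - 1) * epsf a1 a2 a3 a4 l h j s)) := by
      funext s; ring
    rw [heq, integral_add ((int_cvint hl0 habs hα1 hα2 h j).const_mul α)
      (int_rho hl0 habs hα1 hα2 h j), integral_const_mul]
    rfl
  rw [tsum_congr step]
  rw [Summable.tsum_add ((summable_cvint hl0 habs hα1 hα2 h).mul_left α)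
    (summable_ww hl0 habs hα1 hα2 h), tsum_mul_left]

end MainAux2

theorem CD_CV_neg_ratio_tendsto_alpha_double
    (Γ : Measure Sphere2) [IsFiniteMeasure Γ]
    (α a1 a2 a3 a4 l : ℝ) (hα1 : 1 < α) (hα2 : α < 2)
    (hl : l ^ 2 - (a1 + a4) * l + (a1 * a4 - a2 * a3) = 0)
    (hdisc : (a1 - a4) ^ 2 = -(4 * a2 * a3)) (habs : |l| < 1)
    (hl0 : l ≠ 0) (hD3 : D3 Γ α a1 a2 a3 a4 l ≠ 0) :
    (∀ᶠ h : ℕ in atTop, CVneg' Γ α a1 a2 a3 a4 l h ≠ 0) ∧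
    Tendsto (fun h : ℕ => CDneg' Γ α a1 a2 a3 a4 l h / CVneg' Γ α a1 a2 a3 a4 l h) atTop (𝓝 α) := by
  have hr0 : (0:ℝ) < |l| := abs_pos.mpr hl0
  have hD0 : (0:ℝ) < |D3 Γ α a1 a2 a3 a4 l| := abs_pos.mpr hD3
  have hMc := @Mc_pos a1 a2 a3 a4 l
  have hΓ0 : (0:ℝ) ≤ (Γ Set.univ).toReal := ENNReal.toReal_nonneg
  set E := E3 Γ α a1 a2 a3 a4 l with hE
  set D := D3 Γ α a1 a2 a3 a4 l with hD
  set N₀ : ℕ := max (⌈2 * |E| / |D|⌉₊) 1 with hN₀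
  have hlow : ∀ h : ℕ, N₀ ≤ h →
      |l| ^ h * ((h:ℝ) * |D| / 2) ≤ |CVneg' Γ α a1 a2 a3 a4 l h|
        ∧ 0 < (h:ℝ) * |D| / 2 := by
    intro h hh
    have hh1 : 1 ≤ h := le_trans (le_max_right _ 1) hh
    have hhR : (1:ℝ) ≤ (h:ℝ) := by exact_mod_cast hh1
    have hceil : 2 * |E| / |D| ≤ (h:ℝ) := by
      calc 2 * |E| / |D| ≤ (⌈2 * |E| / |D|⌉₊ : ℝ) := Nat.le_ceil _
        _ ≤ (N₀ : ℝ) := by exact_mod_cast le_max_left _ 1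
        _ ≤ (h : ℝ) := by exact_mod_cast hh
    have hED : |E| ≤ (h:ℝ) * |D| / 2 := by
      rw [div_le_iff₀ hD0] at hceil
      nlinarith
    have hcv := CV_formula (Γ := Γ) (α := α) (a1 := a1) (a2 := a2) (a3 := a3) (a4 := a4)
      hl0 habs hα1 hα2 h
    rw [← hE, ← hD] at hcv
    have habs2 : |CVneg' Γ α a1 a2 a3 a4 l h| = |l| ^ h * |E + (h:ℝ) * D| := by
      rw [hcv, show l ^ h * E + ((h:ℝ) * l ^ h) * D = l ^ h * (E + (h:ℝ) * D) by ring,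
        abs_mul, abs_pow]
    have htri : (h:ℝ) * |D| - |E| ≤ |E + (h:ℝ) * D| := by
      have h1 := abs_add_le (E + (h:ℝ) * D) (-E)
      rw [show E + (h:ℝ) * D + -E = (h:ℝ) * D by ring, abs_neg] at h1
      rw [abs_mul, Nat.abs_cast] at h1
      linarith
    constructor
    · rw [habs2]
      apply mul_le_mul_of_nonneg_left _ (pow_nonneg (abs_nonneg l) h)
      linarith
    · nlinarith
  have hne : ∀ h : ℕ, N₀ ≤ h → CVneg' Γ α a1 a2 a3 a4 l h ≠ 0 := by
    intro h hh
    obtain ⟨h1, h2⟩ := hlow h hh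
    have hp : 0 < |CVneg' Γ α a1 a2 a3 a4 l h| :=
      lt_of_lt_of_le (mul_pos (pow_pos hr0 h) h2) h1
    exact abs_pos.mp hp
  refine ⟨eventually_atTop.mpr ⟨N₀, hne⟩, ?_⟩
  set T := ∑' j, ccf l j with hT
  have hT0 : 0 ≤ T := tsum_nonneg (ccf_nonneg l)
  set K1 := (15 + 3 * α) * (Γ Set.univ).toReal * T with hK1
  have hK10 : 0 ≤ K1 := mul_nonneg (mul_nonneg (by linarith) hΓ0) hT0
  set q : ℝ := |l| ^ (α - 1) with hq
  have hq0 : 0 < q := Real.rpow_pos_of_pos hr0 _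
  have hq1 : q < 1 := Real.rpow_lt_one hr0.le habs (by linarith)
  set Cf := 2 * (K1 * Mc a1 a2 a3 a4 l ^ α) / |D| with hCf
  have hKM0 : 0 ≤ K1 * Mc a1 a2 a3 a4 l ^ α :=
    mul_nonneg hK10 (Real.rpow_nonneg hMc.le α)
  have hbound : ∀ h : ℕ, N₀ ≤ h →
      ‖CDneg' Γ α a1 a2 a3 a4 l h / CVneg' Γ α a1 a2 a3 a4 l h - α‖
        ≤ Cf * (((h:ℝ) + 1) ^ 2 * q ^ h) := by
    intro h hh
    have hcvne := hne h hh
    obtain ⟨hlo, hpos2⟩ := hlow h hh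
    have hh1 : 1 ≤ h := le_trans (le_max_right _ 1) hh
    have hhR : (1:ℝ) ≤ (h:ℝ) := by exact_mod_cast hh1
    have hdec := CD_decomp (Γ := Γ) (α := α) (a1 := a1) (a2 := a2) (a3 := a3) (a4 := a4)
      hl0 habs hα1 hα2 h
    have hratio : CDneg' Γ α a1 a2 a3 a4 l h / CVneg' Γ α a1 a2 a3 a4 l h - α
        = (∑' j, ww Γ α a1 a2 a3 a4 l h j) / CVneg' Γ α a1 a2 a3 a4 l h := by
      rw [hdec]
      field_simp
      ring
    rw [Real.norm_eq_abs, hratio, abs_div]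
    have hW := W_bound (Γ := Γ) (α := α) (a1 := a1) (a2 := a2) (a3 := a3) (a4 := a4)
      hl0 habs hα1 hα2 h
    rw [← hT, ← hK1] at hW
    have hsplit : (((h:ℝ) + 1) * Mc a1 a2 a3 a4 l * |l| ^ h) ^ α
        = ((h:ℝ) + 1) ^ α * Mc a1 a2 a3 a4 l ^ α * (|l| ^ h) ^ α := by
      rw [Real.mul_rpow (by positivity) (pow_nonneg (abs_nonneg l) h),
        Real.mul_rpow (by positivity) hMc.le]
    have hql : ((|l| ^ h : ℝ)) ^ α = q ^ h * |l| ^ h := by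
      have e1 : ((|l| ^ h : ℝ)) ^ α = (|l| ^ h) ^ (α - 1) * |l| ^ h := by
        rw [show α = (α - 1) + 1 by ring, Real.rpow_add_one (ne_of_gt (pow_pos hr0 h))]
        ring_nf
      have e2 : ((|l| ^ h : ℝ)) ^ (α - 1) = q ^ h := by
        rw [← Real.rpow_natCast |l| h, ← Real.rpow_mul hr0.le, mul_comm,
          Real.rpow_mul hr0.le, Real.rpow_natCast]
      rw [e1, e2]
    have hWnum : |∑' j, ww Γ α a1 a2 a3 a4 l h j|
        ≤ K1 * (((h:ℝ) + 1) ^ α * Mc a1 a2 a3 a4 l ^ α * (q ^ h * |l| ^ h)) := by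
      calc |∑' j, ww Γ α a1 a2 a3 a4 l h j|
          ≤ K1 * (((h:ℝ) + 1) * Mc a1 a2 a3 a4 l * |l| ^ h) ^ α := hW
        _ = K1 * (((h:ℝ) + 1) ^ α * Mc a1 a2 a3 a4 l ^ α * (q ^ h * |l| ^ h)) := by
            rw [hsplit, hql]
    have hdenpos : 0 < |l| ^ h * ((h:ℝ) * |D| / 2) := mul_pos (pow_pos hr0 h) hpos2
    have hquot : |∑' j, ww Γ α a1 a2 a3 a4 l h j| / |CVneg' Γ α a1 a2 a3 a4 l h|
        ≤ (K1 * (((h:ℝ) + 1) ^ α * Mc a1 a2 a3 a4 l ^ α * (q ^ h * |l| ^ h)))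
          / (|l| ^ h * ((h:ℝ) * |D| / 2)) := by
      apply div_le_div₀ _ hWnum hdenpos hlo
      have : (0:ℝ) ≤ ((h:ℝ) + 1) ^ α := Real.rpow_nonneg (by linarith) α
      have : (0:ℝ) ≤ Mc a1 a2 a3 a4 l ^ α := Real.rpow_nonneg hMc.le α
      positivity
    refine hquot.trans ?_
    rw [div_le_iff₀ hdenpos]
    have hexp : Cf * (((h:ℝ) + 1) ^ 2 * q ^ h) * (|l| ^ h * ((h:ℝ) * |D| / 2))
        = (K1 * Mc a1 a2 a3 a4 l ^ α) * ((((h:ℝ) + 1) ^ 2 * (h:ℝ)) * (q ^ h * |l| ^ h)) := by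
      rw [hCf]
      field_simp
    rw [hexp, show K1 * (((h:ℝ) + 1) ^ α * Mc a1 a2 a3 a4 l ^ α * (q ^ h * |l| ^ h))
      = (K1 * Mc a1 a2 a3 a4 l ^ α) * (((h:ℝ) + 1) ^ α * (q ^ h * |l| ^ h)) by ring]
    apply mul_le_mul_of_nonneg_left _ hKM0
    apply mul_le_mul_of_nonneg_right _ (by positivity)
    have hstep1 : ((h:ℝ) + 1) ^ α ≤ ((h:ℝ) + 1) ^ (2:ℝ) :=
      Real.rpow_le_rpow_of_exponent_le (by linarith) hα2.le
    have hstep2 : ((h:ℝ) + 1) ^ (2:ℝ) = ((h:ℝ) + 1) ^ (2:ℕ) := by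
      rw [show ((2:ℝ)) = ((2:ℕ):ℝ) by norm_num, Real.rpow_natCast]
    have hstep3 : ((h:ℝ) + 1) ^ (2:ℕ) ≤ ((h:ℝ) + 1) ^ 2 * (h:ℝ) := by nlinarith
    calc ((h:ℝ) + 1) ^ α ≤ ((h:ℝ) + 1) ^ (2:ℝ) := hstep1
      _ = ((h:ℝ) + 1) ^ (2:ℕ) := hstep2
      _ ≤ ((h:ℝ) + 1) ^ 2 * (h:ℝ) := hstep3
  have hg : Tendsto (fun h : ℕ => Cf * (((h:ℝ) + 1) ^ 2 * q ^ h)) atTop (𝓝 0) := by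
    have h1 : Tendsto (fun n : ℕ => (n:ℝ) ^ 2 * q ^ n) atTop (𝓝 0) :=
      tendsto_pow_const_mul_const_pow_of_lt_one 2 hq0.le hq1
    have h2 := h1.comp (tendsto_add_atTop_nat 1)
    have h4 := h2.const_mul (Cf / q)
    rw [mul_zero] at h4
    have h3 : (fun n : ℕ => Cf / q * (((n + 1 : ℕ):ℝ) ^ 2 * q ^ (n + 1)))
        = fun h : ℕ => Cf * (((h:ℝ) + 1) ^ 2 * q ^ h) := by
      funext n
      push_cast
      field_simp
      ring
    rw [← h3]
    exact h4
  have hzero : Tendsto (fun h : ℕ => CDneg' Γ α a1 a2 a3 a4 l h / CVneg' Γ α a1 a2 a3 a4 l h - α)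
      atTop (𝓝 0) :=
    squeeze_zero_norm' (eventually_atTop.mpr ⟨N₀, hbound⟩) hg
  have hfin := hzero.add (tendsto_const_nhds (x := α) (f := atTop))
  rw [zero_add] at hfin
  refine hfin.congr (fun h => by ring)
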